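/- Let G be a real random variable with the centered Gaussian distribution N(0,σ²), σ > 0, and let X be a real random variable independent of G with E[X] = 0 and E[|X|³] < ∞. Then for every ε > 0 and u ∈ ℝ, | ℙ(G + εX ≥ u) − Ψ(u/σ) − (ε² E[X²]/(2σ²)) Ψ''(u/σ) | ≤ ε³ E[|X|³]/(6 σ³ √(2π)). -/

import Mathlib

set_option maxHeartbeats 1000000


open MeasureTheory ProbabilityTheory intervalIntegral

/-- The standard Gaussian tail function `Ψ(x) = (2π)^{-1/2} ∫_x^∞ e^{-t²/2} dt`. -/
noncomputable def Psi (x : ℝ) : ℝ :=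
  ∫ t in Set.Ioi x, (Real.sqrt (2 * Real.pi))⁻¹ * Real.exp (-t ^ 2 / 2)

/-- Second derivative of the Gaussian tail: `Ψ''(x) = (2π)^{-1/2} x e^{-x²/2}`. -/
noncomputable def PsiD2 (x : ℝ) : ℝ :=
  (Real.sqrt (2 * Real.pi))⁻¹ * x * Real.exp (-x ^ 2 / 2)

noncomputable def phi (x : ℝ) : ℝ := (Real.sqrt (2 * Real.pi))⁻¹ * Real.exp (-x ^ 2 / 2)

noncomputable def PsiD3 (x : ℝ) : ℝ := (Real.sqrt (2 * Real.pi))⁻¹ * (1 - x ^ 2) * Real.exp (-x ^ 2 / 2)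

lemma phi_cont : Continuous phi := by
  unfold phi; continuity

lemma phi_integrable : Integrable phi := by
  have h : Integrable (fun x : ℝ => Real.exp (-(1/2 : ℝ) * x ^ 2)) := integrable_exp_neg_mul_sq (by norm_num)
  have := h.const_mul (Real.sqrt (2 * Real.pi))⁻¹
  refine this.congr (by filter_upwards with x; unfold phi; ring_nf)

lemma phi_nonneg (x : ℝ) : 0 ≤ phi x := by
  unfold phi
  positivity

lemma Psi_eq_sub (x : ℝ) : Psi x = Psi 0 - ∫ t in (0:ℝ)..x, phi t := by
  have key : ∀ a b : ℝ, a ≤ b → Psi a - Psi b = ∫ t in a..b, phi t := by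
    intro a b hab
    rw [intervalIntegral.integral_of_le hab]
    have : Set.Ioi a = Set.Ioc a b ∪ Set.Ioi b := (Set.Ioc_union_Ioi_eq_Ioi hab).symm
    have hdisj : Disjoint (Set.Ioc a b) (Set.Ioi b) := by
      rw [Set.disjoint_left]; intro t ht ht'
      exact absurd ht.2 (not_le.mpr ht')
    have hI : Psi a = (∫ t in Set.Ioc a b, phi t) + ∫ t in Set.Ioi b, phi t := by
      rw [show Psi a = ∫ t in Set.Ioi a, phi t from rfl, this,
        setIntegral_union hdisj measurableSet_Ioi phi_integrable.integrableOn
          phi_integrable.integrableOn]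
    rw [hI]; unfold Psi phi; ring
  rcases le_or_gt 0 x with h | h
  · have := key 0 x h; linarith
  · have := key x 0 h.le
    rw [intervalIntegral.integral_symm]
    linarith

lemma hasDerivAt_Psi (x : ℝ) : HasDerivAt Psi (-phi x) x := by
  have h : HasDerivAt (fun y => ∫ t in (0:ℝ)..y, phi t) (phi x) x := by
    exact (intervalIntegral.integral_hasStrictDerivAt_right
      phi_integrable.intervalIntegrable
      phi_cont.stronglyMeasurable.stronglyMeasurableAtFilter
      phi_cont.continuousAt).hasDerivAt
  have h2 : HasDerivAt (fun y => Psi 0 - ∫ t in (0:ℝ)..y, phi t) (-phi x) x :=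
    (h.const_sub (Psi 0))
  exact h2.congr_of_eventuallyEq (by filter_upwards with y using (Psi_eq_sub y))

lemma hasDerivAt_negphi (x : ℝ) : HasDerivAt (fun y => -phi y) (PsiD2 x) x := by
  have h : HasDerivAt (fun y : ℝ => Real.exp (-y ^ 2 / 2)) (-x * Real.exp (-x ^ 2 / 2)) x := by
    have hx : HasDerivAt (fun y : ℝ => -y ^ 2 / 2) (-x) x := by
      have := ((hasDerivAt_pow 2 x).neg).div_const 2
      exact this.congr_deriv (by rw [show (2:ℕ) - 1 = 1 from rfl, pow_one]; push_cast; ring)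
    convert hx.exp using 1
    ring
  have := (h.const_mul (Real.sqrt (2 * Real.pi))⁻¹).neg
  refine this.congr_deriv ?_ |>.congr_of_eventuallyEq ?_
  · unfold PsiD2; ring
  · filter_upwards with y; unfold phi; rfl

lemma hasDerivAt_PsiD2 (x : ℝ) : HasDerivAt PsiD2 (PsiD3 x) x := by
  have h : HasDerivAt (fun y : ℝ => Real.exp (-y ^ 2 / 2)) (-x * Real.exp (-x ^ 2 / 2)) x := by
    have hx : HasDerivAt (fun y : ℝ => -y ^ 2 / 2) (-x) x := by
      have := ((hasDerivAt_pow 2 x).neg).div_const 2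
      exact this.congr_deriv (by rw [show (2:ℕ) - 1 = 1 from rfl, pow_one]; push_cast; ring)
    convert hx.exp using 1
    ring
  have hid : HasDerivAt (fun y : ℝ => (Real.sqrt (2 * Real.pi))⁻¹ * y) ((Real.sqrt (2 * Real.pi))⁻¹) x := by
    simpa using (hasDerivAt_id x).const_mul (Real.sqrt (2 * Real.pi))⁻¹
  have := hid.mul h
  refine this.congr_deriv ?_ |>.congr_of_eventuallyEq ?_
  · unfold PsiD3; ring
  · filter_upwards with y; unfold PsiD2; rfl

lemma PsiD3_bound (x : ℝ) : |PsiD3 x| ≤ (Real.sqrt (2 * Real.pi))⁻¹ := by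
  have key : |1 - x ^ 2| * Real.exp (-x ^ 2 / 2) ≤ 1 := by
    rcases abs_cases (1 - x ^ 2) with ⟨he, h2⟩ | ⟨he, h2⟩ <;> rw [he]
    · have hle : Real.exp (-x ^ 2 / 2) ≤ 1 := by
        rw [Real.exp_le_one_iff]; nlinarith [sq_nonneg x]
      nlinarith [Real.exp_pos (-x ^ 2 / 2)]
    · have h3 : x ^ 2 - 1 ≤ Real.exp (x ^ 2 / 2) := by
        have h4 : (1 + x ^ 2 / 4) ≤ Real.exp (x ^ 2 / 4) := by
          have := Real.add_one_le_exp (x ^ 2 / 4); linarith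
        have h5 : Real.exp (x ^ 2 / 2) = Real.exp (x ^ 2 / 4) * Real.exp (x ^ 2 / 4) := by
          rw [← Real.exp_add]; ring_nf
        nlinarith [sq_nonneg x, sq_nonneg (x ^ 2 - 4), Real.exp_pos (x ^ 2 / 4)]
      have hprod : Real.exp (-x ^ 2 / 2) * Real.exp (x ^ 2 / 2) = 1 := by
        rw [← Real.exp_add, show -x ^ 2 / 2 + x ^ 2 / 2 = 0 by ring, Real.exp_zero]
      nlinarith [Real.exp_pos (-x ^ 2 / 2), Real.exp_pos (x ^ 2 / 2)]
  have h0 : (0:ℝ) ≤ (Real.sqrt (2 * Real.pi))⁻¹ := by positivity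
  have heq : |PsiD3 x| = (Real.sqrt (2 * Real.pi))⁻¹ * (|1 - x ^ 2| * Real.exp (-x ^ 2 / 2)) := by
    unfold PsiD3
    rw [abs_mul, abs_mul, abs_of_nonneg h0, abs_of_pos (Real.exp_pos _), mul_assoc]
  rw [heq]
  nlinarith [key, abs_nonneg (1 - x ^ 2), Real.exp_pos (-x ^ 2 / 2)]

lemma taylor2_nonneg {f f1 f2 : ℝ → ℝ} {M : ℝ}
    (h1 : ∀ x, HasDerivAt f (f1 x) x) (h2 : ∀ x, HasDerivAt f1 (f2 x) x)
    (hlip : ∀ x y, |f2 y - f2 x| ≤ M * |y - x|)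
    (c δ : ℝ) (hδ : 0 ≤ δ) :
    |f (c + δ) - f c - δ * f1 c - δ ^ 2 / 2 * f2 c| ≤ M * δ ^ 3 / 6 := by
  have hf1c : Continuous f1 := by
    refine continuous_iff_continuousAt.mpr fun x => (h2 x).continuousAt
  have hf2c : Continuous f2 := by
    have : ∀ x y : ℝ, dist (f2 x) (f2 y) ≤ M * dist x y := by
      intro x y
      simpa [Real.dist_eq, abs_sub_comm] using hlip y x
    refine continuous_iff_continuousAt.mpr fun x => ?_
    rcases le_or_gt M 0 with hM | hM
    · have hconst : ∀ y, f2 y = f2 x := by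
        intro y
        have hl := hlip x y
        have h0 : M * |y - x| ≤ 0 := mul_nonpos_of_nonpos_of_nonneg hM (abs_nonneg _)
        have hz : |f2 y - f2 x| = 0 := le_antisymm (hl.trans h0) (abs_nonneg _)
        have := sub_eq_zero.mp (abs_eq_zero.mp hz)
        linarith
      have : f2 = fun _ => f2 x := funext hconst
      rw [this]
      exact continuousAt_const
    · exact (LipschitzWith.of_dist_le_mul (K := ⟨M, hM.le⟩) (by
        intro a b; show dist (f2 a) (f2 b) ≤ M * dist a b; simpa [Real.dist_eq, abs_sub_comm] using hlip b a)).continuous.continuousAt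
  -- inner bound
  have inner : ∀ t, c ≤ t → |f1 t - f1 c - (t - c) * f2 c| ≤ M * (t - c) ^ 2 / 2 := by
    intro t hct
    have hFTC : ∫ s in c..t, f2 s = f1 t - f1 c :=
      integral_eq_sub_of_hasDerivAt (fun s _ => h2 s) (hf2c.intervalIntegrable c t)
    have hconst : ∫ _ in c..t, f2 c = (t - c) * f2 c := by
      rw [intervalIntegral.integral_const]; simp [smul_eq_mul]
    have heq : f1 t - f1 c - (t - c) * f2 c = ∫ s in c..t, (f2 s - f2 c) := by
      rw [integral_sub (hf2c.intervalIntegrable c t) (intervalIntegrable_const), hFTC, hconst]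
    rw [heq]
    calc |∫ s in c..t, (f2 s - f2 c)| ≤ ∫ s in c..t, |f2 s - f2 c| :=
          abs_integral_le_integral_abs hct
      _ ≤ ∫ s in c..t, M * (s - c) := by
          apply integral_mono_on hct
            ((hf2c.sub continuous_const).abs.intervalIntegrable c t)
            (((continuous_const.mul (continuous_id.sub continuous_const)) :
              Continuous fun s : ℝ => M * (s - c)).intervalIntegrable c t)
          intro s hs
          have := hlip c s
          rwa [abs_of_nonneg (by linarith [hs.1] : (0:ℝ) ≤ s - c)] at this
      _ = M * (t - c) ^ 2 / 2 := by
          rw [intervalIntegral.integral_const_mul]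
          rw [intervalIntegral.integral_comp_sub_right (fun s => s) c]
          rw [integral_id]
          ring
  -- outer
  have hFTC1 : ∫ t in c..(c + δ), f1 t = f (c + δ) - f c :=
    integral_eq_sub_of_hasDerivAt (fun t _ => h1 t) (hf1c.intervalIntegrable _ _)
  have hconst1 : ∫ _ in c..(c + δ), f1 c = δ * f1 c := by
    rw [intervalIntegral.integral_const]; simp [smul_eq_mul]
  have hlin : ∫ t in c..(c + δ), (t - c) * f2 c = δ ^ 2 / 2 * f2 c := by
    rw [intervalIntegral.integral_mul_const,
      intervalIntegral.integral_comp_sub_right (fun s => s) c, integral_id]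
    ring
  have hclin : Continuous fun t : ℝ => (t - c) * f2 c := by fun_prop
  have heq : f (c + δ) - f c - δ * f1 c - δ ^ 2 / 2 * f2 c
      = ∫ t in c..(c + δ), (f1 t - f1 c - (t - c) * f2 c) := by
    rw [integral_sub ((show Continuous fun t => f1 t - f1 c from hf1c.sub continuous_const).intervalIntegrable _ _)
        (hclin.intervalIntegrable _ _),
      integral_sub (hf1c.intervalIntegrable _ _) intervalIntegrable_const,
      hFTC1, hconst1, hlin]
  rw [heq]
  have hcd : c ≤ c + δ := by linarith
  calc |∫ t in c..(c + δ), (f1 t - f1 c - (t - c) * f2 c)|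
      ≤ ∫ t in c..(c + δ), |f1 t - f1 c - (t - c) * f2 c| :=
        abs_integral_le_integral_abs hcd
    _ ≤ ∫ t in c..(c + δ), M * (t - c) ^ 2 / 2 := by
        apply integral_mono_on hcd
          (((hf1c.sub continuous_const).sub
            ((continuous_id.sub continuous_const).mul continuous_const)).abs.intervalIntegrable _ _)
          ((((continuous_const.mul ((continuous_id.sub continuous_const).pow 2)).div_const 2) :
            Continuous fun t : ℝ => M * (t - c) ^ 2 / 2).intervalIntegrable _ _)
        intro t ht
        exact inner t ht.1
    _ = M * δ ^ 3 / 6 := by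
        simp_rw [div_eq_mul_inv, mul_assoc]
        rw [intervalIntegral.integral_const_mul]
        rw [show (fun t : ℝ => (t - c) ^ 2 * 2⁻¹) = fun t : ℝ => ((t - c) ^ 2 * 2⁻¹) from rfl]
        rw [intervalIntegral.integral_mul_const,
          intervalIntegral.integral_comp_sub_right (fun s => s ^ 2) c, integral_pow]
        ring

lemma taylor2 {f f1 f2 : ℝ → ℝ} {M : ℝ}
    (h1 : ∀ x, HasDerivAt f (f1 x) x) (h2 : ∀ x, HasDerivAt f1 (f2 x) x)
    (hlip : ∀ x y, |f2 y - f2 x| ≤ M * |y - x|)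
    (c δ : ℝ) :
    |f (c + δ) - f c - δ * f1 c - δ ^ 2 / 2 * f2 c| ≤ M * |δ| ^ 3 / 6 := by
  rcases le_or_gt 0 δ with hδ | hδ
  · rw [abs_of_nonneg hδ]; exact taylor2_nonneg h1 h2 hlip c δ hδ
  · have g1 : ∀ x : ℝ, HasDerivAt (fun y => f (-y)) (-f1 (-x)) x := by
      intro x
      simpa [Function.comp_def] using (h1 (-x)).comp x (hasDerivAt_neg x)
    have g2 : ∀ x : ℝ, HasDerivAt (fun y => -f1 (-y)) (f2 (-x)) x := by
      intro x
      have := ((h2 (-x)).comp x (hasDerivAt_neg x)).neg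
      exact this.congr_deriv (by simp)
    have glip : ∀ x y : ℝ, |f2 (-y) - f2 (-x)| ≤ M * |y - x| := by
      intro x y
      have hl := hlip (-x) (-y)
      rw [show (-y - -x : ℝ) = -(y - x) by ring, abs_neg] at hl
      exact hl
    have := taylor2_nonneg (f := fun y => f (-y)) (f1 := fun y => -f1 (-y))
      (f2 := fun y => f2 (-y)) g1 g2 glip (-c) (-δ) (by linarith)
    rw [abs_of_neg hδ]
    have harg : -c + -δ = -(c + δ) := by ring
    rw [harg] at this
    simp only [neg_neg] at this
    calc |f (c + δ) - f c - δ * f1 c - δ ^ 2 / 2 * f2 c|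
        = |f (c + δ) - f c - -δ * -f1 c - (-δ) ^ 2 / 2 * f2 c| := by ring_nf
      _ ≤ M * (-δ) ^ 3 / 6 := this
      _ = M * (-δ) ^ 3 / 6 := rfl

lemma Psi_def' (x : ℝ) : Psi x = ∫ t in Set.Ioi x, phi t := rfl

lemma pdf_eq {σ : ℝ} (hσ : 0 < σ) (x : ℝ) :
    gaussianPDFReal 0 ⟨σ ^ 2, sq_nonneg σ⟩ x = σ⁻¹ * phi (σ⁻¹ * x) := by
  unfold gaussianPDFReal phi
  change (Real.sqrt (2 * Real.pi * σ ^ 2))⁻¹ * Real.exp (-(x - 0) ^ 2 / (2 * σ ^ 2)) = _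
  have hsq : Real.sqrt (2 * Real.pi * σ ^ 2) = Real.sqrt (2 * Real.pi) * σ := by
    rw [Real.sqrt_mul (by positivity) (σ ^ 2), Real.sqrt_sq hσ.le]
  rw [hsq]
  have harg : -(x - 0) ^ 2 / (2 * σ ^ 2) = -(σ⁻¹ * x) ^ 2 / 2 := by
    ring
  rw [harg, mul_inv]
  ring

lemma gaussian_tail {σ : ℝ} (hσ : 0 < σ) (a : ℝ) :
    (gaussianReal 0 ⟨σ ^ 2, sq_nonneg σ⟩) (Set.Ici a) = ENNReal.ofReal (Psi (a / σ)) := by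
  have hv : (⟨σ ^ 2, sq_nonneg σ⟩ : NNReal) ≠ 0 := by
    intro h
    have : σ ^ 2 = 0 := congrArg NNReal.toReal h
    exact (pow_ne_zero 2 hσ.ne') this
  rw [gaussianReal_apply_eq_integral _ hv]
  congr 1
  calc ∫ x in Set.Ici a, gaussianPDFReal 0 ⟨σ ^ 2, sq_nonneg σ⟩ x
      = ∫ x in Set.Ioi a, gaussianPDFReal 0 ⟨σ ^ 2, sq_nonneg σ⟩ x :=
        MeasureTheory.integral_Ici_eq_integral_Ioi
    _ = ∫ x in Set.Ioi a, σ⁻¹ * phi (σ⁻¹ * x) := by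
        apply setIntegral_congr_fun measurableSet_Ioi
        intro x _; exact pdf_eq hσ x
    _ = σ⁻¹ * ∫ x in Set.Ioi a, phi (σ⁻¹ * x) := by
        rw [MeasureTheory.integral_const_mul]
    _ = σ⁻¹ * ((σ⁻¹)⁻¹ • ∫ x in Set.Ioi (σ⁻¹ * a), phi x) := by
        rw [MeasureTheory.integral_comp_mul_left_Ioi phi a (inv_pos.mpr hσ)]
    _ = Psi (a / σ) := by
        rw [Psi_def', smul_eq_mul, inv_inv, div_eq_inv_mul]
        field_simp

lemma Psi_cont : Continuous Psi :=
  continuous_iff_continuousAt.mpr fun x => (hasDerivAt_Psi x).continuousAt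


lemma Psi_nonneg (x : ℝ) : 0 ≤ Psi x := by
  unfold Psi
  positivity

lemma Psi_le (x : ℝ) : Psi x ≤ ∫ t, phi t := by
  exact setIntegral_le_integral phi_integrable (Filter.Eventually.of_forall phi_nonneg)

theorem prob_eq
    {Ω : Type*} [MeasurableSpace Ω] (P : Measure Ω) [IsProbabilityMeasure P]
    (G : Ω → ℝ) (hG_meas : Measurable G)
    (σ : ℝ) (hσ : 0 < σ)
    (hG_law : Measure.map G P = gaussianReal 0 ⟨σ ^ 2, sq_nonneg σ⟩)
    (X : Ω → ℝ) (hX_meas : Measurable X)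
    (hindep : IndepFun X G P)
    (ε : ℝ) (u : ℝ) :
    (P {ω | u ≤ G ω + ε * X ω}).toReal = ∫ ω, Psi ((u - ε * X ω) / σ) ∂P := by
  set s : Set (ℝ × ℝ) := {p | u ≤ p.2 + ε * p.1} with hs_def
  have hs : MeasurableSet s :=
    measurableSet_le measurable_const (measurable_snd.add (measurable_fst.const_mul ε))
  have hpre : {ω | u ≤ G ω + ε * X ω} = (fun ω => (X ω, G ω)) ⁻¹' s := rfl
  have hmap : P.map (fun ω => (X ω, G ω)) = (P.map X).prod (P.map G) :=
    (indepFun_iff_map_prod_eq_prod_map_map hX_meas.aemeasurable hG_meas.aemeasurable).mp hindep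
  have hXG : Measurable fun ω => (X ω, G ω) := hX_meas.prodMk hG_meas
  have step1 : P {ω | u ≤ G ω + ε * X ω} = ((P.map X).prod (P.map G)) s := by
    rw [hpre, ← Measure.map_apply hXG hs, hmap]
  have hsec : ∀ x : ℝ, Prod.mk x ⁻¹' s = Set.Ici (u - ε * x) := by
    intro x
    ext g
    simp only [Set.mem_preimage, Set.mem_setOf_eq, Set.mem_Ici, hs_def]
    constructor <;> intro h <;> linarith
  have step2 : ((P.map X).prod (P.map G)) s
      = ∫⁻ x, ENNReal.ofReal (Psi ((u - ε * x) / σ)) ∂(P.map X) := by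
    rw [Measure.prod_apply hs]
    congr 1
    ext x
    rw [hsec x, hG_law, gaussian_tail hσ]
  set f : ℝ → ℝ := fun x => Psi ((u - ε * x) / σ) with hf_def
  have hf_cont : Continuous f := by
    apply Psi_cont.comp
    fun_prop
  have hf_int : Integrable f (P.map X) := by
    refine Integrable.mono' (integrable_const (∫ t, phi t))
      hf_cont.aestronglyMeasurable ?_
    filter_upwards with x
    rw [Real.norm_eq_abs, abs_of_nonneg (Psi_nonneg _)]
    exact Psi_le _
  have step3 : ∫⁻ x, ENNReal.ofReal (f x) ∂(P.map X)
      = ENNReal.ofReal (∫ x, f x ∂(P.map X)) :=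
    (ofReal_integral_eq_lintegral_ofReal hf_int
      (Filter.Eventually.of_forall fun x => Psi_nonneg _)).symm
  have step4 : ∫ x, f x ∂(P.map X) = ∫ ω, f (X ω) ∂P :=
    integral_map hX_meas.aemeasurable hf_cont.aestronglyMeasurable
  rw [step1, step2, step3, ENNReal.toReal_ofReal
    (integral_nonneg fun x => Psi_nonneg _), step4]

lemma PsiD2_lip (x y : ℝ) :
    |PsiD2 y - PsiD2 x| ≤ (Real.sqrt (2 * Real.pi))⁻¹ * |y - x| := by
  have := Convex.norm_image_sub_le_of_norm_hasDerivWithin_le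
    (f := PsiD2) (f' := PsiD3) (s := Set.univ)
    (fun z _ => (hasDerivAt_PsiD2 z).hasDerivWithinAt)
    (fun z _ => by rw [Real.norm_eq_abs]; exact PsiD3_bound z)
    convex_univ (Set.mem_univ x) (Set.mem_univ y)
  simpa [Real.norm_eq_abs] using this

lemma Psi_taylor (c δ : ℝ) :
    |Psi (c + δ) - Psi c - δ * (-phi c) - δ ^ 2 / 2 * PsiD2 c|
      ≤ (Real.sqrt (2 * Real.pi))⁻¹ * |δ| ^ 3 / 6 :=
  taylor2 (f1 := fun y => -phi y) (f2 := PsiD2)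
    (fun x => hasDerivAt_Psi x) hasDerivAt_negphi (fun x y => PsiD2_lip x y) c δ

/-- Expansion of the second Lipschitz–Killing density
`ℙ(G + εX ≥ u)` of the perturbed field, with explicit cubic error bound. -/
theorem perturbed_tail_probability_expansion
    {Ω : Type*} [MeasurableSpace Ω] (P : Measure Ω) [IsProbabilityMeasure P]
    (G : Ω → ℝ) (hG_meas : Measurable G)
    (σ : ℝ) (hσ : 0 < σ)
    (hG_law : Measure.map G P = gaussianReal 0 ⟨σ ^ 2, sq_nonneg σ⟩)
    (X : Ω → ℝ) (hX_meas : Measurable X)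
    (hindep : IndepFun X G P)
    (hX_mean : ∫ ω, X ω ∂P = 0)
    (hX3 : Integrable (fun ω => |X ω| ^ 3) P)
    (ε : ℝ) (hε : 0 < ε) (u : ℝ) :
    |(P {ω | u ≤ G ω + ε * X ω}).toReal - Psi (u / σ)
        - ε ^ 2 * (∫ ω, (X ω) ^ 2 ∂P) / (2 * σ ^ 2) * PsiD2 (u / σ)|
      ≤ ε ^ 3 * (∫ ω, |X ω| ^ 3 ∂P) / (6 * σ ^ 3 * Real.sqrt (2 * Real.pi)) := by
  set M : ℝ := (Real.sqrt (2 * Real.pi))⁻¹ with hM_def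
  set c : ℝ := u / σ with hc_def
  set k : ℝ := -(ε / σ) with hk_def
  have hk_ne : |k| = ε / σ := by
    rw [hk_def, abs_neg, abs_of_pos (div_pos hε hσ)]
  -- rewrite probability
  have hprob := prob_eq P G hG_meas σ hσ hG_law X hX_meas hindep ε u
  have harg : ∀ x : ℝ, (u - ε * x) / σ = c + k * x := by
    intro x
    rw [hc_def, hk_def]
    ring
  rw [hprob]
  have hint_congr : ∫ ω, Psi ((u - ε * X ω) / σ) ∂P = ∫ ω, Psi (c + k * X ω) ∂P := by
    congr 1; funext ω; rw [harg]
  rw [hint_congr]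
  -- integrability facts
  have habs3 : Integrable (fun ω => |X ω| ^ 3 + 1) P := hX3.add (integrable_const 1)
  have hX1 : Integrable X P := by
    refine habs3.mono' hX_meas.aestronglyMeasurable ?_
    filter_upwards with ω
    rw [Real.norm_eq_abs]
    nlinarith [abs_nonneg (X ω), sq_nonneg (|X ω| - 1), sq_nonneg (|X ω| + 1)]
  have hX2 : Integrable (fun ω => (X ω) ^ 2) P := by
    refine habs3.mono' ((hX_meas.pow_const 2).aestronglyMeasurable) ?_
    filter_upwards with ω
    rw [Real.norm_eq_abs, abs_of_nonneg (sq_nonneg _), ← sq_abs]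
    nlinarith [abs_nonneg (X ω), sq_nonneg (|X ω| - 1)]
  have hPsiX : Integrable (fun ω => Psi (c + k * X ω)) P := by
    refine Integrable.mono' (integrable_const (∫ t, phi t))
      ((Psi_cont.measurable.comp
        ((measurable_const.add (hX_meas.const_mul k)) :
          Measurable fun ω => c + k * X ω)).aestronglyMeasurable) ?_
    filter_upwards with ω
    rw [Real.norm_eq_abs, abs_of_nonneg (Psi_nonneg _)]
    exact Psi_le _
  -- remainder
  set A : ℝ := k * (-phi c) with hA_def
  set B : ℝ := k ^ 2 / 2 * PsiD2 c with hB_def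
  have hRem_bound : ∀ x : ℝ, |Psi (c + k * x) - Psi c - A * x - B * x ^ 2|
      ≤ M * (ε / σ) ^ 3 / 6 * |x| ^ 3 := by
    intro x
    have h := Psi_taylor c (k * x)
    have heq : Psi (c + k * x) - Psi c - A * x - B * x ^ 2
        = Psi (c + k * x) - Psi c - (k * x) * (-phi c) - (k * x) ^ 2 / 2 * PsiD2 c := by
      rw [hA_def, hB_def]; ring
    rw [heq]
    have habs : |k * x| = (ε / σ) * |x| := by rw [abs_mul, hk_ne]
    calc |Psi (c + k * x) - Psi c - (k * x) * (-phi c) - (k * x) ^ 2 / 2 * PsiD2 c|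
        ≤ M * |k * x| ^ 3 / 6 := h
      _ = M * (ε / σ) ^ 3 / 6 * |x| ^ 3 := by rw [habs]; ring
  -- integral of remainder
  have hRemInt : Integrable (fun ω => Psi (c + k * X ω) - Psi c - A * X ω - B * (X ω) ^ 2) P :=
    ((hPsiX.sub (integrable_const (Psi c))).sub (hX1.const_mul A)).sub (hX2.const_mul B)
  have i1 : Integrable (fun ω => Psi (c + k * X ω) - Psi c) P :=
    hPsiX.sub (integrable_const (Psi c))
  have i4 : Integrable (fun ω => A * X ω) P := hX1.const_mul A
  have i2 : Integrable (fun ω => Psi (c + k * X ω) - Psi c - A * X ω) P := i1.sub i4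
  have i3 : Integrable (fun ω => B * X ω ^ 2) P := hX2.const_mul B
  have hint_Rem : ∫ ω, (Psi (c + k * X ω) - Psi c - A * X ω - B * (X ω) ^ 2) ∂P
      = (∫ ω, Psi (c + k * X ω) ∂P) - Psi c - B * ∫ ω, (X ω) ^ 2 ∂P := by
    rw [integral_sub i2 i3, integral_sub i1 i4, integral_sub hPsiX (integrable_const (Psi c))]
    rw [MeasureTheory.integral_const_mul, MeasureTheory.integral_const_mul, hX_mean, mul_zero, sub_zero]
    simp [measure_univ]
  have hgoal_eq : ∫ ω, Psi (c + k * X ω) ∂P - Psi (u / σ)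
        - ε ^ 2 * (∫ ω, (X ω) ^ 2 ∂P) / (2 * σ ^ 2) * PsiD2 (u / σ)
      = ∫ ω, (Psi (c + k * X ω) - Psi c - A * X ω - B * (X ω) ^ 2) ∂P := by
    rw [hint_Rem, ← hc_def]
    have hB : B = ε ^ 2 / (2 * σ ^ 2) * PsiD2 c := by
      rw [hB_def, hk_def]
      rw [show (-(ε / σ)) ^ 2 = ε ^ 2 / σ ^ 2 from by rw [neg_pow]; simp [div_pow]]
      field_simp
    rw [hB]
    ring
  rw [hgoal_eq]
  -- final bound
  have hbound_int : Integrable (fun ω => M * (ε / σ) ^ 3 / 6 * |X ω| ^ 3) P :=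
    hX3.const_mul _
  have habs_le : |∫ ω, (Psi (c + k * X ω) - Psi c - A * X ω - B * (X ω) ^ 2) ∂P|
      ≤ ∫ ω, M * (ε / σ) ^ 3 / 6 * |X ω| ^ 3 ∂P := by
    rw [← Real.norm_eq_abs]
    refine norm_integral_le_of_norm_le hbound_int ?_
    filter_upwards with ω
    rw [Real.norm_eq_abs]
    exact hRem_bound (X ω)
  refine habs_le.trans (le_of_eq ?_)
  rw [MeasureTheory.integral_const_mul, hM_def]
  have h2π : (0:ℝ) < Real.sqrt (2 * Real.pi) := Real.sqrt_pos.mpr (by positivity)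
  field_simp
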